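/- Let Q → N be a surjective homomorphism of abelian groups with kernel K, and let P be a simplicial abelian group with P₀ = Q, each Pₙ of the form Q ⊕ ℤ^{Yₙ}, together with a surjective quasi-isomorphism P → N (constant). Set T = ker((P/K)^{collapse} → N), i.e., T is the simplicial abelian group kernel of P/K → N where K = ker(Q → N) is included in each Pₙ via Q. Then Hₙ(T) = 0 for n ≥ 2 and n = 0, and H₁(T) ≅ ker(Q → N). -/

import Mathlib

/-!
Write `K = ker(Q → N)` and `C = P/K`. Since `P → N` is a quasi-isomorphism onto a constant
simplicial group, `Hₙ(P) = 0` for `n ≥ 1` and `H₀(P) ≅ N`; a constant simplicial group has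
homology concentrated in degree `0`. The long exact sequence of `0 → K → P → C → 0` then gives
`Hₙ(C) = 0` for `n ≥ 2`, `H₁(C) ≅ H₀(K) = K` (the connecting map is onto because `K → P → N`
is zero) and `H₀(C) ≅ H₀(P) ≅ N`. Feeding this into the long exact sequence of
`0 → T → C → N → 0` kills `Hₙ(T)` for `n ≠ 1` and identifies `H₁(T)` with `H₁(C) ≅ K`.
-/

open CategoryTheory AlgebraicTopology Limits

noncomputable instance : Abelian (SimplicialObject (ModuleCat ℤ)) := by
  dsimp [SimplicialObject]; infer_instance

/-- The homology of a simplicial abelian group (via its alternating face map complex). -/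
noncomputable abbrev simpHomology (T : SimplicialObject (ModuleCat ℤ)) (n : ℕ) :
    ModuleCat ℤ :=
  ((alternatingFaceMapComplex (ModuleCat ℤ)).obj T).homology n

open HomologicalComplex

section ConstantSimplicialObject

variable {𝒜 : Type*} [Category 𝒜]

lemma alternatingFaceMapComplex_const_d [Preadditive 𝒜] (A : 𝒜) (n : ℕ) :
    ((alternatingFaceMapComplex 𝒜).obj ((Functor.const SimplexCategoryᵒᵖ).obj A)).d (n + 1) n =
      if Even n then 0 else 𝟙 A := by
  rw [alternatingFaceMapComplex_obj_d]
  dsimp [AlternatingFaceMapComplex.objD, SimplicialObject.δ]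
  rw [← Finset.sum_smul, Fin.sum_univ_eq_sum_range (fun i => ((-1 : ℤ) ^ i)), neg_one_geom_sum]
  split_ifs <;> simp_all [Nat.even_add_one]

variable [Abelian 𝒜]

lemma isZero_homology_succ_alternatingFaceMapComplex_const (A : 𝒜) (n : ℕ) :
    IsZero (((alternatingFaceMapComplex 𝒜).obj
      ((Functor.const SimplexCategoryᵒᵖ).obj A)).homology (n + 1)) := by
  set X := (alternatingFaceMapComplex 𝒜).obj ((Functor.const SimplexCategoryᵒᵖ).obj A)
  rw [← exactAt_iff_isZero_homology,
    exactAt_iff' _ (n + 1 + 1) (n + 1) n (by simp) (by simp)]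
  by_cases hn : Even n
  · refine (ShortComplex.exact_iff_epi _ ?_).2 ?_
    · exact (alternatingFaceMapComplex_const_d A n).trans (if_pos hn)
    · change Epi (X.d (n + 1 + 1) (n + 1))
      rw [alternatingFaceMapComplex_const_d, if_neg (by simpa [Nat.even_add_one] using hn)]
      exact (inferInstance : Epi (𝟙 A))
  · refine (ShortComplex.exact_iff_mono _ ?_).2 ?_
    · change X.d (n + 1 + 1) (n + 1) = 0
      rw [alternatingFaceMapComplex_const_d, if_pos (by simpa [Nat.even_add_one] using hn)]
    · change Mono (X.d (n + 1) n)
      rw [alternatingFaceMapComplex_const_d, if_neg hn]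
      exact (inferInstance : Mono (𝟙 A))

noncomputable def homologyZeroAlternatingFaceMapComplexConstIso (A : 𝒜) :
    ((alternatingFaceMapComplex 𝒜).obj ((Functor.const SimplexCategoryᵒᵖ).obj A)).homology 0 ≅
      A :=
  ChainComplex.isoHomologyι₀ _ ≪≫ (pOpcyclesIso _ 1 0 (by simp)
    ((alternatingFaceMapComplex_const_d A 0).trans (if_pos Even.zero))).symm

end ConstantSimplicialObject

section ShortExactSequences

variable {𝒜 : Type*} [Category 𝒜] [Abelian 𝒜]

lemma homologyMap_eq_zero_of_comp_eq_zero {ι : Type*} {c : ComplexShape ι}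
    {X Y Z : HomologicalComplex 𝒜 c} {f : X ⟶ Y} {g : Y ⟶ Z} (w : f ≫ g = 0) (i : ι)
    [Mono (homologyMap g i)] : homologyMap f i = 0 :=
  zero_of_comp_mono (homologyMap g i) (by rw [← homologyMap_comp, w, homologyMap_zero])

namespace CategoryTheory.ShortComplex.ShortExact

variable {ι : Type*} {c : ComplexShape ι} {S : ShortComplex (HomologicalComplex 𝒜 c)}

lemma isZero_homology_X₃ (hS : S.ShortExact) {i j : ι} (hij : c.Rel i j)
    (h₂ : IsZero (S.X₂.homology i)) (h₁ : IsZero (S.X₁.homology j)) :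
    IsZero (S.X₃.homology i) :=
  (hS.homology_exact₃ i j hij).isZero_X₂ (h₂.eq_zero_of_src _) (h₁.eq_zero_of_tgt _)

lemma isZero_homology_X₁_of_mono (hS : S.ShortExact) {j : ι}
    (h₃ : ∀ i, c.Rel i j → IsZero (S.X₃.homology i))
    [Mono (HomologicalComplex.homologyMap S.g j)] :
    IsZero (S.X₁.homology j) := by
  rw [← exactAt_iff_isZero_homology]
  exact hS.exactAt_X₁ j inferInstance fun i hij => (h₃ i hij).epi _

lemma isIso_homologyMap_g_of_not_rel (hS : S.ShortExact) {i : ι} (hi : ∀ j, ¬ c.Rel i j)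
    (hf : HomologicalComplex.homologyMap S.f i = 0) :
    IsIso (HomologicalComplex.homologyMap S.g i) :=
  have := hS.epi_g
  have : Epi (HomologicalComplex.homologyMap S.g i) :=
    epi_homologyMap_of_epi_of_not_rel S.g i hi
  have : Mono (HomologicalComplex.homologyMap S.g i) := (hS.homology_exact₂ i).mono_g hf
  isIso_of_mono_of_epi _

lemma isIso_homologyMap_f_of_isZero (hS : S.ShortExact) {i j : ι} (hij : c.Rel i j)
    (h₃ : IsZero (S.X₃.homology i)) (h₃' : IsZero (S.X₃.homology j)) :
    IsIso (HomologicalComplex.homologyMap S.f j) :=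
  have : Mono (HomologicalComplex.homologyMap S.f j) :=
    (hS.homology_exact₁ i j hij).mono_g (h₃.eq_zero_of_src _)
  have : Epi (HomologicalComplex.homologyMap S.f j) :=
    (hS.homology_exact₂ j).epi_f (h₃'.eq_zero_of_tgt _)
  isIso_of_mono_of_epi _

lemma isIso_δ_of_homologyMap_f_eq_zero (hS : S.ShortExact) {i j : ι} (hij : c.Rel i j)
    (h₂ : IsZero (S.X₂.homology i)) (hf : HomologicalComplex.homologyMap S.f j = 0) :
    IsIso (hS.δ i j hij) :=
  have : Mono (hS.δ i j hij) := hS.mono_δ i j hij h₂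
  have : Epi (hS.δ i j hij) := (hS.homology_exact₁ i j hij).epi_f hf
  isIso_of_mono_of_epi _

lemma map_alternatingFaceMapComplex {S : ShortComplex (SimplicialObject 𝒜)}
    (hS : S.ShortExact) : (S.map (alternatingFaceMapComplex 𝒜)).ShortExact := by
  rw [shortExact_iff_degreewise_shortExact]
  intro i
  exact hS.map_of_exact ((evaluation _ _).obj (Opposite.op (SimplexCategory.mk i)))

end CategoryTheory.ShortComplex.ShortExact

section Splice

variable {K P C T N : ChainComplex 𝒜 ℕ} {ρ : K ⟶ P} {π : P ⟶ C} {ι : T ⟶ C} {η : C ⟶ N}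
  {w₁ : ρ ≫ π = 0} {w₂ : ι ≫ η = 0}

lemma isZero_homology_zero_of_splice (h₁ : (ShortComplex.mk ρ π w₁).ShortExact)
    (h₂ : (ShortComplex.mk ι η w₂).ShortExact) (hN : IsZero (N.homology 1))
    [IsIso (homologyMap (π ≫ η) 0)] : IsZero (T.homology 0) :=
  have := h₁.isIso_homologyMap_g_of_not_rel (i := 0) (by simp) <|
    homologyMap_eq_zero_of_comp_eq_zero (g := π ≫ η) (by rw [reassoc_of% w₁, zero_comp]) 0
  have : IsIso (homologyMap π 0 ≫ homologyMap η 0) := by rwa [← homologyMap_comp]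
  have := IsIso.of_isIso_comp_left (homologyMap π 0) (homologyMap η 0)
  h₂.isZero_homology_X₁_of_mono (by rintro _ rfl; exact hN)

lemma isZero_homology_add_two_of_splice (h₁ : (ShortComplex.mk ρ π w₁).ShortExact)
    (h₂ : (ShortComplex.mk ι η w₂).ShortExact) (n : ℕ) (hK : IsZero (K.homology (n + 1)))
    (hP : IsZero (P.homology (n + 2))) (hN : IsZero (N.homology (n + 3))) :
    IsZero (T.homology (n + 2)) :=
  have := (h₁.isZero_homology_X₃ rfl hP hK).mono (homologyMap η (n + 2))
  h₂.isZero_homology_X₁_of_mono (by rintro _ rfl; exact hN)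

noncomputable def homologyOneIsoOfSplice (h₁ : (ShortComplex.mk ρ π w₁).ShortExact)
    (h₂ : (ShortComplex.mk ι η w₂).ShortExact) (hP : IsZero (P.homology 1))
    (hN₁ : IsZero (N.homology 1)) (hN₂ : IsZero (N.homology 2))
    [IsIso (homologyMap (π ≫ η) 0)] : T.homology 1 ≅ K.homology 0 :=
  have := h₂.isIso_homologyMap_f_of_isZero (i := 2) rfl hN₂ hN₁
  have := h₁.isIso_δ_of_homologyMap_f_eq_zero rfl hP <|
    homologyMap_eq_zero_of_comp_eq_zero (g := π ≫ η) (by rw [reassoc_of% w₁, zero_comp]) 0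
  asIso (homologyMap ι 1) ≪≫ asIso (h₁.δ 1 0 rfl)

end Splice

end ShortExactSequences

theorem stmt9_general (Q N : Type) [AddCommGroup Q] [AddCommGroup N]
    (g : Q →ₗ[ℤ] N)
    (P : SimplicialObject (ModuleCat ℤ))
    (ι : (Functor.const SimplexCategoryᵒᵖ).obj (ModuleCat.of ℤ Q) ⟶ P)
    (hlevel : ∀ n : SimplexCategoryᵒᵖ, ∃ (Y : Type) (e : P.obj n ≃ₗ[ℤ] Q × (Y →₀ ℤ)),
      ∀ q : Q, e (ι.app n q) = (q, 0))
    (ε : P ⟶ (Functor.const SimplexCategoryᵒᵖ).obj (ModuleCat.of ℤ N))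
    (hεsurj : ∀ n : SimplexCategoryᵒᵖ, Function.Surjective (ε.app n))
    (hquasi : QuasiIso ((alternatingFaceMapComplex (ModuleCat ℤ)).map ε))
    -- the (constant) inclusion of `K = ker g` into `P` via `Q`
    (ρ : (Functor.const SimplexCategoryᵒᵖ).obj (ModuleCat.of ℤ ↥(LinearMap.ker g)) ⟶ P)
    (hρ : ∀ (n : SimplexCategoryᵒᵖ) (k : ↥(LinearMap.ker g)), ρ.app n k = ι.app n (k : Q))
    (hzero : ρ ≫ ε = 0) :
    Limits.IsZero (simpHomology (kernel (cokernel.desc ρ ε hzero)) 0) ∧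
    (∀ n : ℕ, 2 ≤ n → Limits.IsZero (simpHomology (kernel (cokernel.desc ρ ε hzero)) n)) ∧
    Nonempty (simpHomology (kernel (cokernel.desc ρ ε hzero)) 1 ≅
      ModuleCat.of ℤ ↥(LinearMap.ker g)) := by
  have hι : ∀ n, Function.Injective (ι.app n) := fun n q q' h => by
    obtain ⟨Y, e, he⟩ := hlevel n
    simpa [he] using congrArg e h
  have : ∀ n, Mono (ρ.app n) := fun n => (ModuleCat.mono_iff_injective _).2
    fun k k' h => Subtype.ext (hι n (by rw [← hρ, ← hρ, h]))
  have : ∀ n, Epi (ε.app n) := fun n => (ModuleCat.epi_iff_surjective _).2 (hεsurj n)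
  have : Mono ρ := NatTrans.mono_of_mono_app ρ
  have : Epi ε := NatTrans.epi_of_epi_app ε
  have : Epi (cokernel.desc ρ ε hzero) := epi_of_epi_fac (cokernel.π_desc ρ ε hzero)
  have h₁ := (show (ShortComplex.mk _ _ (cokernel.condition ρ)).ShortExact from
    { exact := ShortComplex.cokernelSequence_exact ρ }).map_alternatingFaceMapComplex
  have h₂ := (show (ShortComplex.mk _ _ (kernel.condition (cokernel.desc ρ ε hzero))).ShortExact
    from { exact := ShortComplex.kernelSequence_exact _ }).map_alternatingFaceMapComplex
  have hK := isZero_homology_succ_alternatingFaceMapComplex_const (ModuleCat.of ℤ (LinearMap.ker g))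
  have hN := isZero_homology_succ_alternatingFaceMapComplex_const (ModuleCat.of ℤ N)
  have hP : ∀ n, IsZero (((alternatingFaceMapComplex _).obj P).homology (n + 1)) := fun n =>
    (hN n).of_iso (asIso (homologyMap ((alternatingFaceMapComplex _).map ε) (n + 1)))
  have : IsIso (homologyMap ((alternatingFaceMapComplex _).map (cokernel.π ρ) ≫
      (alternatingFaceMapComplex _).map (cokernel.desc ρ ε hzero)) 0) := by
    rw [← Functor.map_comp, cokernel.π_desc]
    infer_instance
  refine ⟨isZero_homology_zero_of_splice h₁ h₂ (hN 0), fun n hn => ?_,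
    ⟨homologyOneIsoOfSplice h₁ h₂ (hP 0) (hN 0) (hN 1) ≪≫
      homologyZeroAlternatingFaceMapComplexConstIso _⟩⟩
  obtain ⟨m, rfl⟩ := Nat.exists_eq_add_of_le' hn
  exact isZero_homology_add_two_of_splice h₁ h₂ m (hK m) (hP (m + 1)) (hN (m + 2))

/-- let `g : Q → N` be a surjective homomorphism of abelian groups with
kernel `K`, and `P` a simplicial abelian group with each `Pₙ ≅ Q ⊕ ℤ^{Yₙ}` (via a natural
inclusion `ι : Q → Pₙ`), equipped with a surjective quasi-isomorphism `ε : P → N`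
(constant) extending `g`.  Let `T` be the kernel of the induced map `P/K → N`, where `K`
is included in each `Pₙ` via `Q`.  Then `Hₙ(T) = 0` for `n = 0` and `n ≥ 2`, and
`H₁(T) ≅ K = ker(Q → N)`. -/
theorem stmt9 (Q N : Type) [AddCommGroup Q] [AddCommGroup N]
    (g : Q →ₗ[ℤ] N) (hg : Function.Surjective g)
    (P : SimplicialObject (ModuleCat ℤ))
    (ι : (Functor.const SimplexCategoryᵒᵖ).obj (ModuleCat.of ℤ Q) ⟶ P)
    (hlevel : ∀ n : SimplexCategoryᵒᵖ, ∃ (Y : Type) (e : P.obj n ≃ₗ[ℤ] Q × (Y →₀ ℤ)),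
      ∀ q : Q, e (ι.app n q) = (q, 0))
    (ε : P ⟶ (Functor.const SimplexCategoryᵒᵖ).obj (ModuleCat.of ℤ N))
    (hεg : ∀ (n : SimplexCategoryᵒᵖ) (q : Q), ε.app n (ι.app n q) = g q)
    (hεsurj : ∀ n : SimplexCategoryᵒᵖ, Function.Surjective (ε.app n))
    (hquasi : QuasiIso ((alternatingFaceMapComplex (ModuleCat ℤ)).map ε))
    -- the (constant) inclusion of `K = ker g` into `P` via `Q`
    (ρ : (Functor.const SimplexCategoryᵒᵖ).obj (ModuleCat.of ℤ ↥(LinearMap.ker g)) ⟶ P)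
    (hρ : ∀ (n : SimplexCategoryᵒᵖ) (k : ↥(LinearMap.ker g)), ρ.app n k = ι.app n (k : Q))
    (hzero : ρ ≫ ε = 0) :
    Limits.IsZero (simpHomology (kernel (cokernel.desc ρ ε hzero)) 0) ∧
    (∀ n : ℕ, 2 ≤ n → Limits.IsZero (simpHomology (kernel (cokernel.desc ρ ε hzero)) n)) ∧
    Nonempty (simpHomology (kernel (cokernel.desc ρ ε hzero)) 1 ≅
      ModuleCat.of ℤ ↥(LinearMap.ker g)) :=
  stmt9_general Q N g P ι hlevel ε hεsurj hquasi ρ hρ hzero
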